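/- arXiv:1508.00241 — 5 statements merged into one kernel-verified Lean document; each statement's English description precedes it below -/
import Mathlib

section
/- Let (M,α) be a contact manifold with Reeb field ξ and let ∇ be a contact connection on M. Then ∇ω = 0, where ω = dα. That is, for all vector fields X,Y,Z on M: X(ω(Y,Z)) = ω(∇_X Y, Z) + ω(Y, ∇_X Z). -/
/-- A contact connection `∇` on a contact manifold `(M,α)` with Reeb
field `ξ` satisfies `∇ω = 0` for `ω = dα`. Vector fields on `M` are modelled as
`ℝ`-derivations of the algebra `R` of smooth functions; `α` is an `R`-linear
`1`-form, `ω X Y = X(α Y) - Y(α X) - α ⁅X,Y⁆` is `dα`, and `∇` is a contact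
connection: it preserves `D = ker α`, `∇_ξ Y = [ξ,Y]` on `D`, `∇ξ = 0`,
`(∇_Y dα)|_{D×D} = 0` for `Y ∈ Γ(D)`, and `[X₁,X₂] = ∇_{X₁}X₂ - ∇_{X₂}X₁ - dα(X₁,X₂)ξ`. -/
theorem stmt_10 {R : Type*} [CommRing R] [Algebra ℝ R]
    (α : Derivation ℝ R R →ₗ[R] R) (ξ : Derivation ℝ R R)
    (hαξ : α ξ = 1)
    (ω : Derivation ℝ R R → Derivation ℝ R R → R)
    (hω : ∀ X Y, ω X Y = X (α Y) - Y (α X) - α ⁅X, Y⁆)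
    (hωξ : ∀ Y, ω ξ Y = 0)
    (nabla : Derivation ℝ R R →ₗ[ℝ] Derivation ℝ R R →ₗ[ℝ] Derivation ℝ R R)
    (hC1 : ∀ (f : R) (X Y : Derivation ℝ R R), nabla (f • X) Y = f • nabla X Y)
    (hC2 : ∀ (f : R) (X Y : Derivation ℝ R R),
      nabla X (f • Y) = X f • Y + f • nabla X Y)
    (h1 : ∀ X Y, α Y = 0 → α (nabla X Y) = 0)
    (h2 : ∀ Y, α Y = 0 → nabla ξ Y = ⁅ξ, Y⁆)
    (h3 : ∀ X, nabla X ξ = 0)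
    (h4 : ∀ Y Y₁ Y₂, α Y = 0 → α Y₁ = 0 → α Y₂ = 0 →
      Y (ω Y₁ Y₂) - ω (nabla Y Y₁) Y₂ - ω Y₁ (nabla Y Y₂) = 0)
    (h5 : ∀ X₁ X₂, ⁅X₁, X₂⁆ = nabla X₁ X₂ - nabla X₂ X₁ - ω X₁ X₂ • ξ) :
    ∀ X Y Z, X (ω Y Z) = ω (nabla X Y) Z + ω Y (nabla X Z) := by
  -- basic pointwise facts
  have hsmul : ∀ (f : R) (X : Derivation ℝ R R) (a : R), (f • X) a = f * X a :=
    fun f X a => rfl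
  have hbrs1 : ∀ (f : R) (X Y : Derivation ℝ R R),
      ⁅f • X, Y⁆ = f • ⁅X, Y⁆ - Y f • X := by
    intro f X Y
    ext a
    simp only [Derivation.commutator_apply, Derivation.sub_apply, Derivation.smul_apply,
      hsmul, Derivation.leibniz, smul_eq_mul]
    ring
  have hbrs2 : ∀ (f : R) (X Y : Derivation ℝ R R),
      ⁅X, f • Y⁆ = f • ⁅X, Y⁆ + X f • Y := by
    intro f X Y
    ext a
    simp only [Derivation.commutator_apply, Derivation.add_apply, Derivation.smul_apply,
      hsmul, Derivation.leibniz, smul_eq_mul]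
    ring
  -- ω is R-bilinear
  have hωR1 : ∀ (f : R) (X Y : Derivation ℝ R R), ω (f • X) Y = f * ω X Y := by
    intro f X Y
    rw [hω, hω, hbrs1]
    simp only [hsmul, map_sub, map_smul, Derivation.leibniz, smul_eq_mul]
    ring
  have hωR2 : ∀ (f : R) (X Y : Derivation ℝ R R), ω X (f • Y) = f * ω X Y := by
    intro f X Y
    rw [hω, hω, hbrs2]
    simp only [hsmul, map_add, map_smul, Derivation.leibniz, smul_eq_mul]
    ring
  have hωadd1 : ∀ (X X' Y : Derivation ℝ R R), ω (X + X') Y = ω X Y + ω X' Y := by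
    intro X X' Y
    simp only [hω, add_lie, map_add, Derivation.add_apply]
    ring
  have hωadd2 : ∀ (X Y Y' : Derivation ℝ R R), ω X (Y + Y') = ω X Y + ω X Y' := by
    intro X Y Y'
    simp only [hω, lie_add, map_add, Derivation.add_apply]
    ring
  have hω0L : ∀ Y, ω 0 Y = 0 := by
    intro Y; simp [hω]
  have hω0R : ∀ Y, ω Y 0 = 0 := by
    intro Y; simp [hω]
  -- ξ(α W) = α ⁅ξ, W⁆
  have hαder : ∀ W : Derivation ℝ R R, ξ (α W) = α ⁅ξ, W⁆ := by
    intro W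
    have := hωξ W
    rw [hω, hαξ, Derivation.map_one_eq_zero] at this
    linear_combination this
  have hωYξ : ∀ Y, ω Y ξ = 0 := by
    intro Y
    rw [hω, hαξ, Derivation.map_one_eq_zero]
    rw [← lie_skew, map_neg, ← hαder]
    ring
  -- case Y = ξ
  have Pξ2 : ∀ X Z, X (ω ξ Z) = ω (nabla X ξ) Z + ω ξ (nabla X Z) := by
    intro X Z
    rw [hωξ, h3, hω0L, hωξ, map_zero]
    ring
  -- case Z = ξ
  have Pξ3 : ∀ X Y, X (ω Y ξ) = ω (nabla X Y) ξ + ω Y (nabla X ξ) := by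
    intro X Y
    rw [hωYξ, h3, hω0R, hωYξ, map_zero]
    ring
  -- case X = ξ, Y,Z ∈ D : Lie derivative computation
  have PξD : ∀ Y Z, α Y = 0 → α Z = 0 →
      ξ (ω Y Z) = ω (nabla ξ Y) Z + ω Y (nabla ξ Z) := by
    intro Y Z hY hZ
    rw [h2 Y hY, h2 Z hZ]
    have hbY : α ⁅ξ, Y⁆ = 0 := by rw [← hαder, hY, map_zero]
    have hbZ : α ⁅ξ, Z⁆ = 0 := by rw [← hαder, hZ, map_zero]
    have e1 : ω Y Z = -α ⁅Y, Z⁆ := by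
      rw [hω, hY, hZ, map_zero, map_zero]; ring
    have e2 : ω ⁅ξ, Y⁆ Z = -α ⁅⁅ξ, Y⁆, Z⁆ := by
      rw [hω, hZ, hbY, map_zero, map_zero]; ring
    have e3 : ω Y ⁅ξ, Z⁆ = -α ⁅Y, ⁅ξ, Z⁆⁆ := by
      rw [hω, hY, hbZ, map_zero, map_zero]; ring
    rw [e1, e2, e3, map_neg, hαder]
    rw [leibniz_lie ξ Y Z, map_add]
    ring
  -- case Y,Z ∈ D, X arbitrary: decompose X
  have PDD : ∀ X Y Z, α Y = 0 → α Z = 0 →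
      X (ω Y Z) = ω (nabla X Y) Z + ω Y (nabla X Z) := by
    intro X Y Z hY hZ
    have hdec : X = α X • ξ + (X - α X • ξ) := by abel
    have hX' : ∀ a : R, (X - α X • ξ) a = X a - α X * ξ a := by
      intro a
      have : (X - α X • ξ) a = X a - (α X • ξ) a := by
        rw [sub_eq_add_neg, Derivation.add_apply]
        simp [hsmul]
        ring
      rw [this, hsmul]
    have hXD : α (X - α X • ξ) = 0 := by
      rw [map_sub, map_smul, hαξ, smul_eq_mul, mul_one, sub_self]
    have hD := h4 (X - α X • ξ) Y Z hXD hY hZ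
    have hXD' : (X - α X • ξ) (ω Y Z) =
        ω (nabla (X - α X • ξ) Y) Z + ω Y (nabla (X - α X • ξ) Z) := by
      linear_combination hD
    calc X (ω Y Z) = (α X • ξ) (ω Y Z) + (X - α X • ξ) (ω Y Z) := by
          rw [hsmul, hX']; ring
      _ = α X * ξ (ω Y Z) + (X - α X • ξ) (ω Y Z) := by rw [hsmul]
      _ = α X * (ω (nabla ξ Y) Z + ω Y (nabla ξ Z))
            + (ω (nabla (X - α X • ξ) Y) Z + ω Y (nabla (X - α X • ξ) Z)) := by
          rw [PξD Y Z hY hZ, hXD']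
      _ = ω (nabla X Y) Z + ω Y (nabla X Z) := by
          have nY : nabla X Y = α X • nabla ξ Y + nabla (X - α X • ξ) Y := by
            conv_lhs => rw [hdec]
            rw [map_add, LinearMap.add_apply, hC1]
          have nZ : nabla X Z = α X • nabla ξ Z + nabla (X - α X • ξ) Z := by
            conv_lhs => rw [hdec]
            rw [map_add, LinearMap.add_apply, hC1]
          rw [nY, nZ, hωadd1, hωadd2, hωR1, hωR2]
          ring
  -- Leibniz stability in slot 2
  have Lsmul2 : ∀ (g : R) X Y Z,
      X (ω Y Z) = ω (nabla X Y) Z + ω Y (nabla X Z) →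
      X (ω (g • Y) Z) = ω (nabla X (g • Y)) Z + ω (g • Y) (nabla X Z) := by
    intro g X Y Z hP
    rw [hC2]
    simp only [hωR1, hωR2, hωadd1, Derivation.leibniz, smul_eq_mul, hP]
    ring
  have Lsmul3 : ∀ (g : R) X Y Z,
      X (ω Y Z) = ω (nabla X Y) Z + ω Y (nabla X Z) →
      X (ω Y (g • Z)) = ω (nabla X Y) (g • Z) + ω Y (nabla X (g • Z)) := by
    intro g X Y Z hP
    rw [hC2]
    simp only [hωR1, hωR2, hωadd2, Derivation.leibniz, smul_eq_mul, hP]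
    ring
  have Ladd2 : ∀ (X Y Y' Z : Derivation ℝ R R),
      X (ω Y Z) = ω (nabla X Y) Z + ω Y (nabla X Z) →
      X (ω Y' Z) = ω (nabla X Y') Z + ω Y' (nabla X Z) →
      X (ω (Y + Y') Z) = ω (nabla X (Y + Y')) Z + ω (Y + Y') (nabla X Z) := by
    intro X Y Y' Z hP hP'
    rw [hωadd1, map_add, map_add, hωadd1, hωadd1, hP, hP']
    ring
  have Ladd3 : ∀ (X Y Z Z' : Derivation ℝ R R),
      X (ω Y Z) = ω (nabla X Y) Z + ω Y (nabla X Z) →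
      X (ω Y Z') = ω (nabla X Y) Z' + ω Y (nabla X Z') →
      X (ω Y (Z + Z')) = ω (nabla X Y) (Z + Z') + ω Y (nabla X (Z + Z')) := by
    intro X Y Z Z' hP hP'
    rw [hωadd2, map_add, map_add, hωadd2, hωadd2, hP, hP']
    ring
  -- final assembly
  intro X Y Z
  have hZdec : Z = α Z • ξ + (Z - α Z • ξ) := by abel
  have hZD : α (Z - α Z • ξ) = 0 := by
    rw [map_sub, map_smul, hαξ, smul_eq_mul, mul_one, sub_self]
  have hYdec : Y = α Y • ξ + (Y - α Y • ξ) := by abel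
  have hYD : α (Y - α Y • ξ) = 0 := by
    rw [map_sub, map_smul, hαξ, smul_eq_mul, mul_one, sub_self]
  have stepZ : ∀ Y', α Y' = 0 →
      X (ω Y' Z) = ω (nabla X Y') Z + ω Y' (nabla X Z) := by
    intro Y' hY'
    conv_lhs => rw [hZdec]
    conv_rhs => rw [hZdec]
    exact Ladd3 X Y' _ _ (Lsmul3 (α Z) X Y' ξ (Pξ3 X Y')) (PDD X Y' _ hY' hZD)
  conv_lhs => rw [hYdec]
  conv_rhs => rw [hYdec]
  exact Ladd2 X _ _ Z (Lsmul2 (α Y) X ξ Z (Pξ2 X Z)) (stepZ _ hYD)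
end

section
/- The curvature R of a contact connection ∇ on a contact manifold (M,α) satisfies the first Bianchi identity: R(X,Y)Z + R(Y,Z)X + R(Z,X)Y = 0 for all vector fields X,Y,Z, including the case where one of the arguments is the Reeb field ξ. -/
section ContactBianchiAux

variable {R : Type*} [CommRing R] [Algebra ℝ R]

lemma aux_brack_smul (f : R) (X Y : Derivation ℝ R R) :
    ⁅f • X, Y⁆ = f • ⁅X, Y⁆ - Y f • X := by
  ext g
  simp only [Derivation.commutator_apply, Derivation.coe_smul, Pi.smul_apply,
    Derivation.coe_sub, Pi.sub_apply, Derivation.leibniz, smul_eq_mul]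
  ring

lemma aux_brack_smul' (f : R) (X Y : Derivation ℝ R R) :
    ⁅X, f • Y⁆ = f • ⁅X, Y⁆ + X f • Y := by
  ext g
  simp only [Derivation.commutator_apply, Derivation.coe_smul, Pi.smul_apply,
    Derivation.coe_add, Pi.add_apply, Derivation.leibniz, smul_eq_mul]
  ring

lemma aux_jac (X Y Z : Derivation ℝ R R) :
    ⁅⁅Z, X⁆, Y⁆ = -⁅⁅X, Y⁆, Z⁆ - ⁅⁅Y, Z⁆, X⁆ := by
  ext g
  simp only [Derivation.commutator_apply, Derivation.coe_sub, Derivation.coe_neg,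
    Pi.sub_apply, Pi.neg_apply, map_sub]
  ring

variable (α : Derivation ℝ R R →ₗ[R] R) (ξ : Derivation ℝ R R)
    (hαξ : α ξ = 1)
    (ω : Derivation ℝ R R → Derivation ℝ R R → R)
    (hω : ∀ X Y, ω X Y = X (α Y) - Y (α X) - α ⁅X, Y⁆)
    (hωξ : ∀ Y, ω ξ Y = 0)
    (nabla : Derivation ℝ R R →ₗ[ℝ] Derivation ℝ R R →ₗ[ℝ] Derivation ℝ R R)
    (hC1 : ∀ (f : R) (X Y : Derivation ℝ R R), nabla (f • X) Y = f • nabla X Y)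
    (hC2 : ∀ (f : R) (X Y : Derivation ℝ R R),
      nabla X (f • Y) = X f • Y + f • nabla X Y)
    (h2 : ∀ Y, α Y = 0 → nabla ξ Y = ⁅ξ, Y⁆)
    (h3 : ∀ X, nabla X ξ = 0)
    (h4 : ∀ Y Y₁ Y₂, α Y = 0 → α Y₁ = 0 → α Y₂ = 0 →
      Y (ω Y₁ Y₂) - ω (nabla Y Y₁) Y₂ - ω Y₁ (nabla Y Y₂) = 0)

include hω in
lemma aux_anti : ∀ A B, ω A B = - ω B A := by
  intro A B
  rw [hω, hω, ← lie_skew A B, map_neg]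
  ring

include hω in
lemma aux_sub_l : ∀ (f : R) (A W B : Derivation ℝ R R),
    ω (A - f • W) B = ω A B - f * ω W B := by
  intro f A W B
  rw [hω, hω, hω, sub_lie, aux_brack_smul]
  simp only [map_sub, map_smul, Derivation.coe_sub, Derivation.coe_smul, Pi.sub_apply,
    Pi.smul_apply, Derivation.leibniz, smul_eq_mul]
  ring

include hω in
lemma aux_add_l : ∀ (f : R) (A W B : Derivation ℝ R R),
    ω (A + f • W) B = ω A B + f * ω W B := by
  intro f A W B
  have := aux_sub_l α ω hω (-f) A W B
  rw [neg_smul, sub_neg_eq_add] at this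
  rw [this]; ring

include hω in
lemma aux_sub_r : ∀ (f : R) (A W B : Derivation ℝ R R),
    ω A (B - f • W) = ω A B - f * ω A W := by
  intro f A W B
  rw [aux_anti α ω hω, aux_sub_l α ω hω, aux_anti α ω hω B A, aux_anti α ω hω W A]
  ring

include hω in
lemma aux_add_r : ∀ (f : R) (A W B : Derivation ℝ R R),
    ω A (B + f • W) = ω A B + f * ω A W := by
  intro f A W B
  have := aux_sub_r α ω hω (-f) A W B
  rw [neg_smul, sub_neg_eq_add] at this
  rw [this]; ring

include hω hωξ in
lemma aux_ωξ2 : ∀ A, ω A ξ = 0 := by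
  intro A; rw [aux_anti α ω hω, hωξ, neg_zero]

include hαξ hω hωξ in
lemma aux_αlie : ∀ W, α ⁅ξ, W⁆ = ξ (α W) := by
  intro W
  have h := hωξ W
  rw [hω] at h
  have h2 : W (α ξ) = 0 := by rw [hαξ]; exact W.map_one_eq_zero
  linear_combination -h - h2

include hαξ hC2 h2 h3 in
lemma aux_h2' : ∀ W, nabla ξ W = ⁅ξ, W⁆ := by
  intro W
  have hd : α (W - α W • ξ) = 0 := by
    rw [map_sub, map_smul, hαξ, smul_eq_mul, mul_one, sub_self]
  have e1 := h2 _ hd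
  have e2 : nabla ξ (W - α W • ξ) = nabla ξ W - ξ (α W) • ξ := by
    rw [map_sub, hC2, h3, smul_zero, add_zero]
  have e3 : ⁅ξ, W - α W • ξ⁆ = ⁅ξ, W⁆ - ξ (α W) • ξ := by
    rw [lie_sub, aux_brack_smul', lie_self, smul_zero, zero_add]
  rw [e2, e3] at e1
  exact sub_left_injective e1

include hαξ hω hωξ hC1 hC2 h2 h3 h4 in
lemma aux_F : ∀ A B C : Derivation ℝ R R,
    A (ω B C) - ω (nabla A B) C - ω B (nabla A C) = 0 := by
  intro A B C
  have hAd : α (A - α A • ξ) = 0 := by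
    rw [map_sub, map_smul, hαξ, smul_eq_mul, mul_one, sub_self]
  have hBd : α (B - α B • ξ) = 0 := by
    rw [map_sub, map_smul, hαξ, smul_eq_mul, mul_one, sub_self]
  have hCd : α (C - α C • ξ) = 0 := by
    rw [map_sub, map_smul, hαξ, smul_eq_mul, mul_one, sub_self]
  have r2 : ∀ W : Derivation ℝ R R,
      nabla A W = nabla A (W - α W • ξ) + A (α W) • ξ := by
    intro W
    rw [map_sub, hC2, h3, smul_zero, add_zero]
    abel
  have r1 : ω B C = ω (B - α B • ξ) (C - α C • ξ) := by
    rw [aux_sub_l α ω hω, aux_sub_r α ω hω, hωξ, aux_ωξ2 α ξ ω hω hωξ]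
    ring
  have r3 : ω (nabla A B) C = ω (nabla A (B - α B • ξ)) (C - α C • ξ) := by
    rw [r2 B, aux_add_l α ω hω, hωξ, mul_zero, add_zero,
      aux_sub_r α ω hω, aux_ωξ2 α ξ ω hω hωξ, mul_zero, sub_zero]
  have r4 : ω B (nabla A C) = ω (B - α B • ξ) (nabla A (C - α C • ξ)) := by
    rw [r2 C, aux_add_r α ω hω, aux_ωξ2 α ξ ω hω hωξ, mul_zero, add_zero,
      aux_sub_l α ω hω, hωξ, mul_zero, sub_zero]
  have r5 : A (ω (B - α B • ξ) (C - α C • ξ))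
      = (A - α A • ξ) (ω (B - α B • ξ) (C - α C • ξ))
        + α A * ξ (ω (B - α B • ξ) (C - α C • ξ)) := by
    simp only [Derivation.coe_sub, Pi.sub_apply, Derivation.coe_smul, Pi.smul_apply,
      smul_eq_mul]
    ring
  have r6 : ∀ W : Derivation ℝ R R,
      nabla A W = nabla (A - α A • ξ) W + α A • nabla ξ W := by
    intro W
    rw [map_sub, LinearMap.sub_apply, hC1]
    abel
  have r7 : ω (nabla A (B - α B • ξ)) (C - α C • ξ)
      = ω (nabla (A - α A • ξ) (B - α B • ξ)) (C - α C • ξ)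
        + α A * ω (nabla ξ (B - α B • ξ)) (C - α C • ξ) := by
    rw [r6, aux_add_l α ω hω]
  have r8 : ω (B - α B • ξ) (nabla A (C - α C • ξ))
      = ω (B - α B • ξ) (nabla (A - α A • ξ) (C - α C • ξ))
        + α A * ω (B - α B • ξ) (nabla ξ (C - α C • ξ)) := by
    rw [r6, aux_add_r α ω hω]
  have hF1 := h4 _ _ _ hAd hBd hCd
  have hF2 : ξ (ω (B - α B • ξ) (C - α C • ξ))
      - ω (nabla ξ (B - α B • ξ)) (C - α C • ξ)
      - ω (B - α B • ξ) (nabla ξ (C - α C • ξ)) = 0 := by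
    set B' := B - α B • ξ with hB'
    set C' := C - α C • ξ with hC'
    rw [h2 _ hBd, h2 _ hCd]
    have hαξB : α ⁅ξ, B'⁆ = 0 := by
      rw [aux_αlie α ξ hαξ ω hω hωξ, hBd, map_zero]
    have hαξC : α ⁅ξ, C'⁆ = 0 := by
      rw [aux_αlie α ξ hαξ ω hω hωξ, hCd, map_zero]
    have eb : ω B' C' = - α ⁅B', C'⁆ := by
      rw [hω, hCd, hBd, map_zero, map_zero]; ring
    have e1 : ω ⁅ξ, B'⁆ C' = - α ⁅⁅ξ, B'⁆, C'⁆ := by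
      rw [hω, hCd, hαξB, map_zero, map_zero]; ring
    have e2 : ω B' ⁅ξ, C'⁆ = - α ⁅B', ⁅ξ, C'⁆⁆ := by
      rw [hω, hαξC, hBd, map_zero, map_zero]; ring
    have e3 : ξ (ω B' C') = - α ⁅ξ, ⁅B', C'⁆⁆ := by
      rw [eb, map_neg, ← aux_αlie α ξ hαξ ω hω hωξ]
    have e4 : (⁅ξ, ⁅B', C'⁆⁆ : Derivation ℝ R R) = ⁅⁅ξ, B'⁆, C'⁆ + ⁅B', ⁅ξ, C'⁆⁆ :=
      leibniz_lie ξ B' C'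
    rw [e3, e1, e2, e4, map_add]
    ring
  rw [r1, r3, r4, r5, r7, r8]
  linear_combination hF1 + α A * hF2

variable (h5 : ∀ X₁ X₂, ⁅X₁, X₂⁆ = nabla X₁ X₂ - nabla X₂ X₁ - ω X₁ X₂ • ξ)
    (h2' : ∀ W, nabla ξ W = ⁅ξ, W⁆)
    (hF : ∀ A B C : Derivation ℝ R R,
      A (ω B C) - ω (nabla A B) C - ω B (nabla A C) = 0)
    (hanti : ∀ A B, ω A B = - ω B A)

include hC1 h5 h2' hF hanti in
lemma aux_key : ∀ X Y Z : Derivation ℝ R R,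
    nabla ⁅X, Y⁆ Z = ⁅⁅X, Y⁆, Z⁆ + nabla Z (nabla X Y) - nabla Z (nabla Y X)
      + (ω (nabla X Y) Z - ω (nabla Y X) Z - ω (nabla Z X) Y + ω (nabla Z Y) X) • ξ := by
  intro X Y Z
  have e0 : nabla ⁅X, Y⁆ Z
      = nabla (nabla X Y) Z - nabla (nabla Y X) Z - ω X Y • nabla ξ Z := by
    rw [h5 X Y, map_sub, map_sub, LinearMap.sub_apply, LinearMap.sub_apply, hC1]
  have e1 : ∀ P, nabla P Z = ⁅P, Z⁆ + nabla Z P + ω P Z • ξ := by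
    intro P; rw [h5 P Z]; abel
  have e3 : nabla X Y - nabla Y X = ⁅X, Y⁆ + ω X Y • ξ := by
    rw [h5 X Y]; abel
  have e4' : (⁅⁅X, Y⁆, Z⁆ : Derivation ℝ R R)
      = ⁅nabla X Y, Z⁆ - ⁅nabla Y X, Z⁆ - ω X Y • ⁅ξ, Z⁆ + Z (ω X Y) • ξ := by
    rw [← sub_lie, e3, add_lie, aux_brack_smul]
    abel
  have e5 : Z (ω X Y) = ω (nabla Z X) Y + ω X (nabla Z Y) := by
    linear_combination hF Z X Y
  have e6 : ω X (nabla Z Y) = - ω (nabla Z Y) X := hanti _ _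
  rw [e0, e1 (nabla X Y), e1 (nabla Y X), h2', e4', e5, e6]
  module

end ContactBianchiAux

/-- The curvature `R(X,Y) = ∇_{[X,Y]} - [∇_X,∇_Y]` of a contact
connection satisfies the first Bianchi identity `R(X,Y)Z + R(Y,Z)X + R(Z,X)Y = 0`. Vector fields on `M` are modelled as
`ℝ`-derivations of the algebra `R` of smooth functions; `α` is an `R`-linear
`1`-form, `ω X Y = X(α Y) - Y(α X) - α ⁅X,Y⁆` is `dα`, and `∇` is a contact
connection: it preserves `D = ker α`, `∇_ξ Y = [ξ,Y]` on `D`, `∇ξ = 0`,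
`(∇_Y dα)|_{D×D} = 0` for `Y ∈ Γ(D)`, and `[X₁,X₂] = ∇_{X₁}X₂ - ∇_{X₂}X₁ - dα(X₁,X₂)ξ`. -/
theorem stmt_12 {R : Type*} [CommRing R] [Algebra ℝ R]
    (α : Derivation ℝ R R →ₗ[R] R) (ξ : Derivation ℝ R R)
    (hαξ : α ξ = 1)
    (ω : Derivation ℝ R R → Derivation ℝ R R → R)
    (hω : ∀ X Y, ω X Y = X (α Y) - Y (α X) - α ⁅X, Y⁆)
    (hωξ : ∀ Y, ω ξ Y = 0)
    (nabla : Derivation ℝ R R →ₗ[ℝ] Derivation ℝ R R →ₗ[ℝ] Derivation ℝ R R)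
    (hC1 : ∀ (f : R) (X Y : Derivation ℝ R R), nabla (f • X) Y = f • nabla X Y)
    (hC2 : ∀ (f : R) (X Y : Derivation ℝ R R),
      nabla X (f • Y) = X f • Y + f • nabla X Y)
    (h1 : ∀ X Y, α Y = 0 → α (nabla X Y) = 0)
    (h2 : ∀ Y, α Y = 0 → nabla ξ Y = ⁅ξ, Y⁆)
    (h3 : ∀ X, nabla X ξ = 0)
    (h4 : ∀ Y Y₁ Y₂, α Y = 0 → α Y₁ = 0 → α Y₂ = 0 →
      Y (ω Y₁ Y₂) - ω (nabla Y Y₁) Y₂ - ω Y₁ (nabla Y Y₂) = 0)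
    (h5 : ∀ X₁ X₂, ⁅X₁, X₂⁆ = nabla X₁ X₂ - nabla X₂ X₁ - ω X₁ X₂ • ξ) :
    ∀ X Y Z : Derivation ℝ R R,
      (nabla ⁅X, Y⁆ Z - nabla X (nabla Y Z) + nabla Y (nabla X Z)) +
      (nabla ⁅Y, Z⁆ X - nabla Y (nabla Z X) + nabla Z (nabla Y X)) +
      (nabla ⁅Z, X⁆ Y - nabla Z (nabla X Y) + nabla X (nabla Z Y)) = 0 := by
  intro X Y Z
  have hanti : ∀ A B, ω A B = - ω B A := aux_anti α ω hω
  have h2' : ∀ W, nabla ξ W = ⁅ξ, W⁆ :=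
    aux_h2' (α := α) (ξ := ξ) (hαξ := hαξ) (nabla := nabla) (hC2 := hC2)
      (h2 := h2) (h3 := h3)
  have hF : ∀ A B C : Derivation ℝ R R,
      A (ω B C) - ω (nabla A B) C - ω B (nabla A C) = 0 :=
    aux_F (α := α) (ξ := ξ) (hαξ := hαξ) (ω := ω) (hω := hω) (hωξ := hωξ)
      (nabla := nabla) (hC1 := hC1) (hC2 := hC2) (h2 := h2) (h3 := h3) (h4 := h4)
  have key := aux_key (ξ := ξ) (ω := ω) (nabla := nabla) (hC1 := hC1) (h5 := h5)
    (h2' := h2') (hF := hF) (hanti := hanti)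
  rw [key X Y Z, key Y Z X, key Z X Y, aux_jac X Y Z]
  module
end

section
/- Let (D,ω) be a 2n-dimensional symplectic vector space and R a covariant 4-tensor satisfying R(X,Y,Z,U) = -R(Y,X,Z,U), R(X,Y,Z,U) = R(X,Y,U,Z), and the Bianchi identity R(X,Y,Z,U) + R(Y,Z,X,U) + R(Z,X,Y,U) = 0. Then the Ricci tensor σ_R(X,Y) = Trace{Z ↦ R(X,Z)Y} is symmetric: σ_R(X,Y) = σ_R(Y,X). -/
open Finset

/-- For a symplectic curvature tensor `R` (antisymmetric in the first
two slots, symmetric in the last two, satisfying Bianchi) on a `2n`-dimensional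
symplectic vector space, the Ricci tensor
`σ_R(X,Y) = Σᵢ [R(X,Eᵢ,Y,E_{i+n}) - R(X,E_{i+n},Y,Eᵢ)]` (w.r.t. a symplectic
basis) is symmetric. -/
theorem stmt_13 {D : Type*} [AddCommGroup D] [Module ℝ D]
    (n : ℕ)
    (ω : D →ₗ[ℝ] D →ₗ[ℝ] ℝ)
    (halt : ∀ x, ω x x = 0)
    (B : Module.Basis (Fin n ⊕ Fin n) ℝ D)
    (h1 : ∀ i j, ω (B (Sum.inl i)) (B (Sum.inl j)) = 0)
    (h2 : ∀ i j, ω (B (Sum.inr i)) (B (Sum.inr j)) = 0)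
    (h3 : ∀ i j, ω (B (Sum.inl i)) (B (Sum.inr j)) = if i = j then 1 else 0)
    (Rm : D →ₗ[ℝ] D →ₗ[ℝ] D →ₗ[ℝ] D →ₗ[ℝ] ℝ)
    (hanti : ∀ X Y Z U, Rm X Y Z U = - Rm Y X Z U)
    (hsym : ∀ X Y Z U, Rm X Y Z U = Rm X Y U Z)
    (hbianchi : ∀ X Y Z U, Rm X Y Z U + Rm Y Z X U + Rm Z X Y U = 0) :
    ∀ X Y,
      (∑ i : Fin n, (Rm X (B (Sum.inl i)) Y (B (Sum.inr i)) -
        Rm X (B (Sum.inr i)) Y (B (Sum.inl i)))) =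
      (∑ i : Fin n, (Rm Y (B (Sum.inl i)) X (B (Sum.inr i)) -
        Rm Y (B (Sum.inr i)) X (B (Sum.inl i)))) := by
  intro X Y
  apply Finset.sum_congr rfl
  intro i _
  set E := B (Sum.inl i)
  set F := B (Sum.inr i)
  have b1 := hbianchi X E Y F
  have b2 := hbianchi X F Y E
  have a1 := hanti E Y X F
  have a2 := hanti Y X E F
  have a3 := hanti F Y X E
  have a4 := hanti Y X F E
  have s1 := hsym X Y E F
  linarith
end

section
/- With R defined from a symmetric 2-tensor P by the Ricci-type formula R(X,Y,Z,U) = (1/(2n+2))[-ω(X,Z)P(Y,U) + ω(Y,U)P(X,Z) - ω(X,U)P(Y,Z) + ω(Y,Z)P(X,U) - 2ω(X,Y)P(Z,U)], the Ricci tensor of R equals P: σ_R = P. -/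
open Finset

/-- The Ricci tensor of the Ricci-type tensor built from a symmetric
bilinear form `P` equals `P`: `σ_R = P` (computed with respect to a symplectic
basis of the `2n`-dimensional symplectic vector space `(D,ω)`). -/
theorem stmt_15 {D : Type*} [AddCommGroup D] [Module ℝ D]
    (n : ℕ)
    (ω : D →ₗ[ℝ] D →ₗ[ℝ] ℝ)
    (halt : ∀ x, ω x x = 0)
    (B : Module.Basis (Fin n ⊕ Fin n) ℝ D)
    (h1 : ∀ i j, ω (B (Sum.inl i)) (B (Sum.inl j)) = 0)
    (h2 : ∀ i j, ω (B (Sum.inr i)) (B (Sum.inr j)) = 0)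
    (h3 : ∀ i j, ω (B (Sum.inl i)) (B (Sum.inr j)) = if i = j then 1 else 0)
    (P : D →ₗ[ℝ] D →ₗ[ℝ] ℝ)
    (hP : ∀ x y, P x y = P y x)
    (Rm : D → D → D → D → ℝ)
    (hRm : ∀ X Y Z U, Rm X Y Z U = (1 / (2 * (n : ℝ) + 2)) *
      (-(ω X Z) * P Y U + ω Y U * P X Z - ω X U * P Y Z + ω Y Z * P X U -
        2 * ω X Y * P Z U)) :
    ∀ X Y,
      (∑ i : Fin n, (Rm X (B (Sum.inl i)) Y (B (Sum.inr i)) -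
        Rm X (B (Sum.inr i)) Y (B (Sum.inl i)))) = P X Y := by
  intro X Y
  have hanti : ∀ x y, ω x y = -ω y x := by
    intro x y
    have h := halt (x + y)
    simp only [map_add, LinearMap.add_apply, halt] at h
    linarith
  have h3' : ∀ i j, ω (B (Sum.inr i)) (B (Sum.inl j)) = if j = i then -1 else 0 := by
    intro i j
    rw [hanti, h3]
    split <;> simp
  -- first reconstruction lemma, linear in the first slot
  have key1 : ∀ Z W, (∑ i : Fin n, (ω Z (B (Sum.inr i)) * P (B (Sum.inl i)) W -
      ω Z (B (Sum.inl i)) * P (B (Sum.inr i)) W)) = P Z W := by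
    intro Z W
    have hmap : (∑ i : Fin n, ((P (B (Sum.inl i)) W) • ω.flip (B (Sum.inr i)) -
        (P (B (Sum.inr i)) W) • ω.flip (B (Sum.inl i)))) = P.flip W := by
      apply B.ext
      rintro (j | j) <;>
        simp [LinearMap.sum_apply, LinearMap.flip_apply, h1, h2, h3, h3',
          mul_ite, Finset.sum_ite_eq', Finset.sum_ite_eq, sub_eq_iff_eq_add]
    have := congrArg (fun f => f Z) hmap
    simpa [LinearMap.sum_apply, LinearMap.flip_apply, mul_comm] using this
  -- second reconstruction lemma, linear in the second slot
  have key2 : ∀ Z W, (∑ i : Fin n, (ω (B (Sum.inl i)) W * P Z (B (Sum.inr i)) -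
      ω (B (Sum.inr i)) W * P Z (B (Sum.inl i)))) = P Z W := by
    intro Z W
    have hmap : (∑ i : Fin n, ((P Z (B (Sum.inr i))) • (ω (B (Sum.inl i))) -
        (P Z (B (Sum.inl i))) • (ω (B (Sum.inr i))))) = P Z := by
      apply B.ext
      rintro (j | j) <;>
        simp [LinearMap.sum_apply, h1, h2, h3, h3',
          mul_ite, Finset.sum_ite_eq', Finset.sum_ite_eq, sub_eq_iff_eq_add]
    have := congrArg (fun f => f W) hmap
    simpa [LinearMap.sum_apply, mul_comm] using this
  -- main computation
  have hpos : (2 * (n : ℝ) + 2) ≠ 0 := by positivity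
  set c : ℝ := 1 / (2 * (n : ℝ) + 2) with hc
  have hstep : ∀ i : Fin n,
      Rm X (B (Sum.inl i)) Y (B (Sum.inr i)) - Rm X (B (Sum.inr i)) Y (B (Sum.inl i)) =
      c * (2 * P X Y
        + (ω X (B (Sum.inr i)) * P (B (Sum.inl i)) Y - ω X (B (Sum.inl i)) * P (B (Sum.inr i)) Y)
        + (ω (B (Sum.inl i)) Y * P X (B (Sum.inr i)) - ω (B (Sum.inr i)) Y * P X (B (Sum.inl i)))) := by
    intro i
    rw [hRm, hRm, h3', h3]
    simp only [eq_self_iff_true, if_true]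
    rw [hP (B (Sum.inl i)) (B (Sum.inr i)), hP Y (B (Sum.inl i)), hP Y (B (Sum.inr i))]
    ring
  rw [Finset.sum_congr rfl (fun i _ => hstep i), ← Finset.mul_sum]
  simp only [Finset.sum_add_distrib, key1, key2, Finset.sum_const, Finset.card_univ,
    Fintype.card_fin, nsmul_eq_mul]
  rw [hc]
  field_simp
  ring
end

section
/- Let (D,ω) be a 2-dimensional symplectic vector space (n = 1). Then every covariant 4-tensor R on D satisfying R(X,Y,Z,U) = -R(Y,X,Z,U), R(X,Y,Z,U) = R(X,Y,U,Z), and the Bianchi identity is of Ricci type, i.e. R(X,Y,Z,U) = (1/4)[-ω(X,Z)σ(Y,U) + ω(Y,U)σ(X,Z) - ω(X,U)σ(Y,Z) + ω(Y,Z)σ(X,U) - 2ω(X,Y)σ(Z,U)] where σ = σ_R is the Ricci tensor of R. -/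
/-- In dimension `2` (`n = 1`), every symplectic curvature tensor is
of Ricci type: `R(X,Y,Z,U) = (1/4)[-ω(X,Z)σ(Y,U) + ω(Y,U)σ(X,Z) - ω(X,U)σ(Y,Z)
+ ω(Y,Z)σ(X,U) - 2ω(X,Y)σ(Z,U)]` where `σ(X,Y) = R(X,E₁,Y,E₂) - R(X,E₂,Y,E₁)`
for a symplectic basis `E₁,E₂`. -/
theorem stmt_16 {D : Type*} [AddCommGroup D] [Module ℝ D]
    (ω : D →ₗ[ℝ] D →ₗ[ℝ] ℝ)
    (halt : ∀ x, ω x x = 0)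
    (B : Module.Basis (Fin 2) ℝ D)
    (hB : ω (B 0) (B 1) = 1)
    (Rm : D →ₗ[ℝ] D →ₗ[ℝ] D →ₗ[ℝ] D →ₗ[ℝ] ℝ)
    (hanti : ∀ X Y Z U, Rm X Y Z U = - Rm Y X Z U)
    (hsym : ∀ X Y Z U, Rm X Y Z U = Rm X Y U Z)
    (hbianchi : ∀ X Y Z U, Rm X Y Z U + Rm Y Z X U + Rm Z X Y U = 0) :
    ∀ X Y Z U,
      Rm X Y Z U = (1 / 4 : ℝ) *
        (-(ω X Z) * (Rm Y (B 0) U (B 1) - Rm Y (B 1) U (B 0)) +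
          ω Y U * (Rm X (B 0) Z (B 1) - Rm X (B 1) Z (B 0)) -
          ω X U * (Rm Y (B 0) Z (B 1) - Rm Y (B 1) Z (B 0)) +
          ω Y Z * (Rm X (B 0) U (B 1) - Rm X (B 1) U (B 0)) -
          2 * ω X Y * (Rm Z (B 0) U (B 1) - Rm Z (B 1) U (B 0))) := by
  have hω10 : ω (B 1) (B 0) = -1 := by
    have h := halt (B 0 + B 1)
    simp only [map_add, LinearMap.add_apply, halt] at h
    rw [hB] at h; linarith
  have e00 : ∀ z u, Rm (B 0) (B 0) z u = 0 := by
    intro z u; have := hanti (B 0) (B 0) z u; linarith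
  have e11 : ∀ z u, Rm (B 1) (B 1) z u = 0 := by
    intro z u; have := hanti (B 1) (B 1) z u; linarith
  have e10 : ∀ z u, Rm (B 1) (B 0) z u = - Rm (B 0) (B 1) z u := by
    intro z u; exact hanti _ _ _ _
  have e10' : Rm (B 0) (B 1) (B 1) (B 0) = Rm (B 0) (B 1) (B 0) (B 1) := by
    exact (hsym _ _ _ _).symm
  have hrep : ∀ X : D, ∃ a b : ℝ, X = a • B 0 + b • B 1 := by
    intro X
    refine ⟨B.repr X 0, B.repr X 1, ?_⟩
    conv_lhs => rw [← B.sum_repr X]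
    rw [Fin.sum_univ_two]
  intro X Y Z U
  obtain ⟨x0, x1, hX⟩ := hrep X
  obtain ⟨y0, y1, hY⟩ := hrep Y
  obtain ⟨z0, z1, hZ⟩ := hrep Z
  obtain ⟨u0, u1, hU⟩ := hrep U
  subst hX hY hZ hU
  simp only [map_add, map_smul, LinearMap.add_apply, LinearMap.smul_apply, smul_eq_mul,
    e00, e11, e10, e10', hB, hω10, halt]
  ring
end
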